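/- arXiv:2602.19947 — 3 statements merged into one kernel-verified Lean document; each statement's English description precedes it below -/
import Mathlib

section
/- Let ρ > 0, B ∈ ℝ, B₀ ≠ 0, γ ∈ ℝ, with B ≠ 0 or ρ^γ > B₀², and let f = 4ρ^γ / (-(B² + B₀² - ρ^γ) + √((B² + B₀² - ρ^γ)² + 4B²ρ^γ)) (interpreted as 2ρ^γ/(ρ^γ - B₀²) when B = 0 and ρ^γ > B₀²). Define α = (B₀²/ρ)·f/(f-2). Then α = (B² + B₀²)/ρ + 2ρ^{γ-1}/f, and also α = ρ^{γ-1} + B²f/(2ρ) when B ≠ 0. In particular α > 0. -/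
/-!
Write `a = B₀²`, `b = B²`, `p = ρ^γ` and `c = b + a - p`. Since `d = -c + √(c² + 4bp)` satisfies
`d² + 2cd = 4bp`, the number `f = 4p / d` is a root of `b X² - 2c X - 4p`, which factors as
`(f - 2)(bf + 2p) = 2af`. This forces `f > 2` and turns `(a/ρ) f/(f - 2)` into `(bf + 2p)/(2ρ)`,
from which both expressions for `α` and its positivity are immediate.
-/

section RationalizedRoot

variable {a b c p f : ℝ}

lemma neg_add_sqrt_pos (hb : 0 ≤ b) (hp : 0 < p) (h : b ≠ 0 ∨ a < p) :
    0 < -(b + a - p) + √((b + a - p) ^ 2 + 4 * b * p) := by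
  by_cases hb0 : b = 0
  · have hap : a < p := h.resolve_left (not_not.mpr hb0)
    have := Real.sqrt_nonneg ((b + a - p) ^ 2 + 4 * b * p)
    linarith
  · have hbp : 0 < 4 * b * p := by positivity
    have hlt : |b + a - p| < √((b + a - p) ^ 2 + 4 * b * p) := by
      rw [← Real.sqrt_sq_eq_abs]
      exact Real.sqrt_lt_sqrt (sq_nonneg _) (by linarith)
    linarith [le_abs_self (b + a - p)]

lemma quadratic_eq_zero_of_eq_div_neg_add_sqrt (hr : 0 ≤ c ^ 2 + 4 * b * p)
    (hd : -c + √(c ^ 2 + 4 * b * p) ≠ 0) (hf : f = 4 * p / (-c + √(c ^ 2 + 4 * b * p))) :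
    b * f ^ 2 - 2 * c * f - 4 * p = 0 := by
  set d := -c + √(c ^ 2 + 4 * b * p) with hd_def
  have hfd : f * d = 4 * p := by rw [hf]; field_simp
  have hdd : d ^ 2 + 2 * c * d = 4 * b * p := by
    rw [hd_def]; linear_combination Real.sq_sqrt hr
  have hmul : (b * f ^ 2 - 2 * c * f - 4 * p) * d ^ 2 = 0 := by
    linear_combination (b * f * d + 4 * b * p - 2 * c * d) * hfd - 4 * p * hdd
  exact (mul_eq_zero.mp hmul).resolve_right (pow_ne_zero 2 hd)

lemma two_lt_of_quadratic_eq_zero (ha : 0 < a) (hb : 0 ≤ b) (hp : 0 < p) (hf : 0 < f)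
    (hq : b * f ^ 2 - 2 * (b + a - p) * f - 4 * p = 0) : 2 < f := by
  have hfactor : (f - 2) * (b * f + 2 * p) = 2 * a * f := by linear_combination hq
  have : 0 < (f - 2) * (b * f + 2 * p) := hfactor ▸ by positivity
  linarith [(pos_iff_pos_of_mul_pos this).mpr (by positivity : 0 < b * f + 2 * p)]

end RationalizedRoot

theorem stmt_13 (γ B₀ ρ B : ℝ) (hρ : 0 < ρ) (hB₀ : B₀ ≠ 0)
    (hcase : B ≠ 0 ∨ B₀ ^ 2 < ρ ^ γ)
    (f α : ℝ)
    (hf : f = 4 * ρ ^ γ / (-(B ^ 2 + B₀ ^ 2 - ρ ^ γ) +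
      Real.sqrt ((B ^ 2 + B₀ ^ 2 - ρ ^ γ) ^ 2 + 4 * B ^ 2 * ρ ^ γ)))
    (hα : α = (B₀ ^ 2 / ρ) * f / (f - 2)) :
    α = (B ^ 2 + B₀ ^ 2) / ρ + 2 * ρ ^ (γ - 1) / f
    ∧ (B ≠ 0 → α = ρ ^ (γ - 1) + B ^ 2 * f / (2 * ρ))
    ∧ 0 < α := by
  have hp : 0 < ρ ^ γ := Real.rpow_pos_of_pos hρ γ
  have hd := neg_add_sqrt_pos (sq_nonneg B) hp (hcase.imp_left (pow_ne_zero 2))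
  have hfpos : 0 < f := hf ▸ div_pos (by positivity) hd
  have hq := quadratic_eq_zero_of_eq_div_neg_add_sqrt (by positivity) hd.ne' hf
  have hf2 : 2 < f := two_lt_of_quadratic_eq_zero (by positivity) (sq_nonneg B) hp hfpos hq
  have hpow : ρ ^ (γ - 1) = ρ ^ γ / ρ := Real.rpow_sub_one hρ.ne' γ
  have hα' : α = ρ ^ (γ - 1) + B ^ 2 * f / (2 * ρ) := by
    have : f - 2 ≠ 0 := (sub_pos.mpr hf2).ne'
    rw [hα, hpow]
    field_simp
    linear_combination -hq
  refine ⟨?_, fun _ => hα', ?_⟩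
  · rw [hα', hpow]
    field_simp
    linear_combination hq
  · rw [hα']
    positivity
end

section
/- Let 1 < γ < 2, B₀ ≠ 0, and fix ρ with 0 < ρ ≤ 1. With D(B) = (B² + B₀² - ρ^γ)² + 4B²ρ^γ and f(B) = ((B² + B₀² - ρ^γ) + √D(B))/B² for B ≠ 0, one has B² f(B)^{2/(2-γ)} - (2/(2-γ))·( B² - B₀² + ρ^γ + √D(B) )·f(B)^{γ/(2-γ)} ≤ f(B)^{γ/(2-γ)} · ( (B² + B₀² - ρ^γ) - √D(B) - 2(B² - B₀² + ρ^γ) ), and this right-hand side tends to -∞ as B → ∞ uniformly in ρ ∈ (0,1]. -/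
/-!
Write `A = B² + B₀² - ρ^γ`, `E = B² - B₀² + ρ^γ` and `S = √D`. Since
`D = A² + 4B²ρ^γ = E² + 4B²B₀²`, we have `S ≥ |A|` and `S ≥ |E|`, and `B² f = A + S`.
With `q = f^{γ/(2-γ)}` and `c = 2/(2-γ) ≥ 2`, the left-hand side is `q (A + S) - c q (E + S)`,
which differs from the right-hand side `q (A - S - 2E)` by `-(c - 2) q (E + S) ≤ 0`.
For the limit, `B² f = A + S ≥ A + E = 2B²` gives `f ≥ 2`, hence `q ≥ 1`; as `A - S ≤ 0`,
the right-hand side is at most `-2E ≤ -2(B² - B₀²)` once `B² ≥ B₀²`, whatever `ρ ≥ 0`.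
-/

noncomputable section

/-- the discriminant `D(ρ, B)` -/
def Dq (γ B₀ ρ B : ℝ) : ℝ :=
  (B ^ 2 + B₀ ^ 2 - ρ ^ γ) ^ 2 + 4 * B ^ 2 * ρ ^ γ

/-- the diagonalizing quantity `f(ρ, B)` (for `B ≠ 0`) -/
def fq (γ B₀ ρ B : ℝ) : ℝ :=
  ((B ^ 2 + B₀ ^ 2 - ρ ^ γ) + Real.sqrt (Dq γ B₀ ρ B)) / B ^ 2

/-- the right-hand side bound in Statement 15 -/
def rhs15 (γ B₀ ρ B : ℝ) : ℝ :=
  fq γ B₀ ρ B ^ (γ / (2 - γ)) *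
    ((B ^ 2 + B₀ ^ 2 - ρ ^ γ) - Real.sqrt (Dq γ B₀ ρ B)
      - 2 * (B ^ 2 - B₀ ^ 2 + ρ ^ γ))

open Filter

lemma rpow_two_div_sub_eq_mul {f γ : ℝ} (hf : 0 < f) (hγ : γ < 2) :
    f ^ (2 / (2 - γ)) = f ^ (γ / (2 - γ)) * f := by
  have hexp : 2 / (2 - γ) = γ / (2 - γ) + 1 := by
    field_simp [(by linarith : 2 - γ ≠ 0)]
    ring
  rw [hexp, Real.rpow_add hf, Real.rpow_one]

lemma Dq_eq (γ B₀ ρ B : ℝ) :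
    Dq γ B₀ ρ B = (B ^ 2 - B₀ ^ 2 + ρ ^ γ) ^ 2 + 4 * B ^ 2 * B₀ ^ 2 := by
  unfold Dq; ring

lemma abs_add_sub_le_sqrt_Dq (γ B₀ B : ℝ) {ρ : ℝ} (hρ : 0 ≤ ρ) :
    |B ^ 2 + B₀ ^ 2 - ρ ^ γ| ≤ √(Dq γ B₀ ρ B) := by
  refine Real.abs_le_sqrt ?_
  have : 0 ≤ 4 * B ^ 2 * ρ ^ γ := by positivity
  unfold Dq; linarith

lemma abs_sub_add_le_sqrt_Dq (γ B₀ ρ B : ℝ) :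
    |B ^ 2 - B₀ ^ 2 + ρ ^ γ| ≤ √(Dq γ B₀ ρ B) := by
  refine Real.abs_le_sqrt ?_
  rw [Dq_eq]; nlinarith [sq_nonneg (B * B₀)]

lemma sq_mul_fq (γ B₀ ρ : ℝ) {B : ℝ} (hB : B ≠ 0) :
    B ^ 2 * fq γ B₀ ρ B = B ^ 2 + B₀ ^ 2 - ρ ^ γ + √(Dq γ B₀ ρ B) := by
  unfold fq; field_simp

lemma two_le_fq (γ B₀ ρ : ℝ) {B : ℝ} (hB : B ≠ 0) : 2 ≤ fq γ B₀ ρ B := by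
  have hB2 : 0 < B ^ 2 := by positivity
  have hES := (abs_le.mp (abs_sub_add_le_sqrt_Dq γ B₀ ρ B)).2
  rw [← mul_le_mul_iff_right₀ hB2, sq_mul_fq γ B₀ ρ hB]
  linarith

lemma sq_mul_fq_rpow_sub_le_rhs15 {γ : ℝ} (B₀ ρ : ℝ) {B : ℝ} (hγ1 : 1 ≤ γ) (hγ2 : γ < 2)
    (hB : B ≠ 0) :
    B ^ 2 * fq γ B₀ ρ B ^ (2 / (2 - γ))
        - (2 / (2 - γ)) * (B ^ 2 - B₀ ^ 2 + ρ ^ γ + √(Dq γ B₀ ρ B))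
          * fq γ B₀ ρ B ^ (γ / (2 - γ))
      ≤ rhs15 γ B₀ ρ B := by
  have hf : 0 < fq γ B₀ ρ B := by linarith [two_le_fq γ B₀ ρ hB]
  have hq : 0 ≤ fq γ B₀ ρ B ^ (γ / (2 - γ)) := by positivity
  have hc : 2 ≤ 2 / (2 - γ) := by rw [le_div_iff₀ (by linarith)]; linarith
  have hES := (abs_le.mp (abs_sub_add_le_sqrt_Dq γ B₀ ρ B)).1
  have hgap : 0 ≤ fq γ B₀ ρ B ^ (γ / (2 - γ)) *
      ((2 / (2 - γ) - 2) * (B ^ 2 - B₀ ^ 2 + ρ ^ γ + √(Dq γ B₀ ρ B))) :=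
    mul_nonneg hq (mul_nonneg (by linarith) (by linarith))
  unfold rhs15
  rw [rpow_two_div_sub_eq_mul hf hγ2, mul_comm (fq γ B₀ ρ B ^ _), ← mul_assoc,
    sq_mul_fq γ B₀ ρ hB]
  linarith

lemma rhs15_le {γ B₀ ρ B : ℝ} (hγ0 : 0 ≤ γ) (hγ2 : γ < 2) (hρ : 0 ≤ ρ) (hB : B ≠ 0)
    (hB₀B : B₀ ^ 2 ≤ B ^ 2) :
    rhs15 γ B₀ ρ B ≤ -2 * (B ^ 2 - B₀ ^ 2) := by
  have hργ : 0 ≤ ρ ^ γ := Real.rpow_nonneg hρ γ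
  have hAS := (abs_le.mp (abs_add_sub_le_sqrt_Dq γ B₀ B hρ)).2
  have hq : 1 ≤ fq γ B₀ ρ B ^ (γ / (2 - γ)) :=
    Real.one_le_rpow (by linarith [two_le_fq γ B₀ ρ hB]) (div_nonneg hγ0 (by linarith))
  have hneg : B ^ 2 + B₀ ^ 2 - ρ ^ γ - √(Dq γ B₀ ρ B) - 2 * (B ^ 2 - B₀ ^ 2 + ρ ^ γ) ≤ 0 := by
    linarith
  calc rhs15 γ B₀ ρ B
      ≤ B ^ 2 + B₀ ^ 2 - ρ ^ γ - √(Dq γ B₀ ρ B) - 2 * (B ^ 2 - B₀ ^ 2 + ρ ^ γ) :=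
        mul_le_of_one_le_left hneg hq
    _ ≤ -2 * (B ^ 2 - B₀ ^ 2) := by linarith

theorem stmt_15_general (γ B₀ : ℝ) (hγ1 : 1 < γ) (hγ2 : γ < 2) :
    (∀ ρ B : ℝ, 0 < ρ → ρ ≤ 1 → B ≠ 0 →
      B ^ 2 * fq γ B₀ ρ B ^ (2 / (2 - γ))
        - (2 / (2 - γ)) * (B ^ 2 - B₀ ^ 2 + ρ ^ γ + Real.sqrt (Dq γ B₀ ρ B))
          * fq γ B₀ ρ B ^ (γ / (2 - γ))
        ≤ rhs15 γ B₀ ρ B)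
    ∧ (∀ M : ℝ, ∃ B₁ : ℝ, ∀ B : ℝ, B₁ ≤ B → ∀ ρ : ℝ, 0 < ρ → ρ ≤ 1 →
        rhs15 γ B₀ ρ B < M) := by
  refine ⟨fun _ _ _ _ hB ↦ sq_mul_fq_rpow_sub_le_rhs15 B₀ _ hγ1.le hγ2 hB, fun M ↦ ?_⟩
  have hbound : Tendsto (fun B : ℝ ↦ -2 * (B ^ 2 - B₀ ^ 2)) atTop atBot :=
    Tendsto.const_mul_atTop_of_neg (by norm_num)
      (tendsto_atTop_add_const_right _ (-B₀ ^ 2) (tendsto_pow_atTop two_ne_zero))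
  obtain ⟨B₁, hB₁⟩ := eventually_atTop.mp
    ((hbound.eventually (eventually_lt_atBot M)).and (eventually_gt_atTop |B₀|))
  refine ⟨B₁, fun B hB ρ hρ _ ↦ ?_⟩
  obtain ⟨hlt, hB₀B⟩ := hB₁ B hB
  have hB0 : B ≠ 0 := by linarith [abs_nonneg B₀]
  have hsq : B₀ ^ 2 ≤ B ^ 2 := by nlinarith [abs_nonneg B₀, sq_abs B₀]
  exact (rhs15_le (by linarith) hγ2 hρ.le hB0 hsq).trans_lt hlt

theorem stmt_15 (γ B₀ : ℝ) (hγ1 : 1 < γ) (hγ2 : γ < 2) (hB₀ : B₀ ≠ 0) :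
    (∀ ρ B : ℝ, 0 < ρ → ρ ≤ 1 → B ≠ 0 →
      B ^ 2 * fq γ B₀ ρ B ^ (2 / (2 - γ))
        - (2 / (2 - γ)) * (B ^ 2 - B₀ ^ 2 + ρ ^ γ + Real.sqrt (Dq γ B₀ ρ B))
          * fq γ B₀ ρ B ^ (γ / (2 - γ))
        ≤ rhs15 γ B₀ ρ B)
    ∧ (∀ M : ℝ, ∃ B₁ : ℝ, ∀ B : ℝ, B₁ ≤ B → ∀ ρ : ℝ, 0 < ρ → ρ ≤ 1 →
        rhs15 γ B₀ ρ B < M) :=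
  stmt_15_general γ B₀ hγ1 hγ2

end
end

section
/- Let 1 < γ < 2 and B₀ ≠ 0. For ρ > B₀^{2/γ}, define f(ρ) = 2ρ^γ/(ρ^γ - B₀²). Then f(ρ) → 2⁺ as ρ → ∞, and consequently w(ρ, 0) = B₀² f(ρ)^{2/(2-γ)} - ∫_{f(ρ)}^4 (2B₀²/(2-γ)) · (1 - s/4)/(1 - s/2)² · s^{2/(2-γ)} ds → -∞ as ρ → ∞. -/
/-!
Since `f ρ = 2 + 2 B₀² / (ρ^γ - B₀²)`, `f` tends to `2` from above and the first term of
`w(ρ, 0)` stays bounded. On `(2, 3]` the integrand is at least `C 2^p / (s - 2)²`, whose integral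
from `t` grows like `(t - 2)⁻¹` as `t → 2⁺`, so the integral term tends to `+∞`.
-/

open Filter Set intervalIntegral Topology

theorem tendsto_mul_div_sub_atTop_nhdsGT {a c : ℝ} (ha : 0 < a) (hc : 0 < c) :
    Tendsto (fun x => a * x / (x - c)) atTop (𝓝[>] a) := by
  have h_eq : ∀ᶠ x in atTop, a + a * c / (x - c) = a * x / (x - c) := by
    filter_upwards [eventually_gt_atTop c] with x hx
    field_simp [(sub_pos.2 hx).ne']
    ring
  have h_gt : ∀ᶠ x in atTop, a < a * x / (x - c) := by
    filter_upwards [eventually_gt_atTop c] with x hx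
    rw [lt_div_iff₀ (sub_pos.2 hx)]
    nlinarith
  have h_lim : Tendsto (fun x => a + a * c / (x - c)) atTop (𝓝 a) := by
    simpa [sub_eq_add_neg] using tendsto_const_nhds.add
      (tendsto_const_nhds.div_atTop (tendsto_atTop_add_const_right _ (-c) tendsto_id))
  exact tendsto_nhdsWithin_of_tendsto_nhds_of_eventually_within _ (h_lim.congr' h_eq) h_gt

theorem integral_inv_sq_sub {a t b : ℝ} (hat : a < t) (hab : a < b) :
    ∫ s in t..b, ((s - a) ^ 2)⁻¹ = (t - a)⁻¹ - (b - a)⁻¹ := by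
  have h_zero : (0 : ℝ) ∉ uIcc (t - a) (b - a) := fun h =>
    (lt_min (sub_pos.2 hat) (sub_pos.2 hab)).not_ge h.1
  simp only [← zpow_natCast, ← zpow_neg]
  rw [integral_comp_sub_right (fun x : ℝ => x ^ (-(2 : ℕ) : ℤ)),
    integral_zpow (Or.inr ⟨by norm_num, h_zero⟩)]
  norm_num
  ring

theorem tendsto_integral_inv_sq_sub_nhdsGT {a b : ℝ} (hab : a < b) :
    Tendsto (fun t => ∫ s in t..b, ((s - a) ^ 2)⁻¹) (𝓝[>] a) atTop := by
  have h_shift : Tendsto (fun t => t - a) (𝓝[>] a) (𝓝[>] 0) := by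
    refine tendsto_nhdsWithin_of_tendsto_nhds_of_eventually_within _ ?_ ?_
    · simpa using ((continuous_sub_right a).tendsto a).mono_left nhdsWithin_le_nhds
    · filter_upwards [self_mem_nhdsWithin] with t ht
      exact sub_pos.2 (mem_Ioi.1 ht)
  refine (tendsto_atTop_add_const_right _ (-(b - a)⁻¹)
    (tendsto_inv_nhdsGT_zero.comp h_shift)).congr' ?_
  filter_upwards [self_mem_nhdsWithin] with t ht
  rw [integral_inv_sq_sub ht hab]
  rfl

theorem tendsto_integral_nhdsGT_atTop_of_le {f g : ℝ → ℝ} {a b : ℝ} (hab : a < b)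
    (hf : ContinuousOn f (Ioc a b)) (hg : ContinuousOn g (Ioc a b))
    (hle : ∀ s ∈ Ioc a b, f s ≤ g s)
    (hf_top : Tendsto (fun t => ∫ s in t..b, f s) (𝓝[>] a) atTop) :
    Tendsto (fun t => ∫ s in t..b, g s) (𝓝[>] a) atTop := by
  refine tendsto_atTop_mono' _ ?_ hf_top
  filter_upwards [Ioo_mem_nhdsGT hab] with t ht
  have h_sub : uIcc t b ⊆ Ioc a b := by
    rw [uIcc_of_le ht.2.le]
    exact Icc_subset_Ioc_iff ht.2.le |>.2 ⟨ht.1, le_rfl⟩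
  exact integral_mono_on ht.2.le ((hf.mono h_sub).intervalIntegrable)
    ((hg.mono h_sub).intervalIntegrable) fun s hs => hle s (h_sub (by rwa [uIcc_of_le ht.2.le]))

noncomputable def wIntegrand (C p s : ℝ) : ℝ := C * ((1 - s / 4) / (1 - s / 2) ^ 2) * s ^ p

theorem continuousOn_wIntegrand (C p : ℝ) : ContinuousOn (wIntegrand C p) (Ioi 2) := by
  unfold wIntegrand
  fun_prop (disch := intro; simp; grind)

theorem inv_sq_le_wIntegrand {C p s : ℝ} (hC : 0 ≤ C) (hp : 0 ≤ p) (hs : s ∈ Ioc 2 3) :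
    C * 2 ^ p * ((s - 2) ^ 2)⁻¹ ≤ wIntegrand C p s := by
  obtain ⟨hs2, hs3⟩ := hs
  have h_ratio : ((s - 2) ^ 2)⁻¹ ≤ (1 - s / 4) / (1 - s / 2) ^ 2 := by
    rw [inv_eq_one_div, div_le_div_iff₀ (by nlinarith) (by nlinarith)]
    nlinarith
  have h_pow : (2 : ℝ) ^ p ≤ s ^ p := Real.rpow_le_rpow (by norm_num) hs2.le hp
  calc C * 2 ^ p * ((s - 2) ^ 2)⁻¹ = C * ((s - 2) ^ 2)⁻¹ * 2 ^ p := by ring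
    _ ≤ C * ((1 - s / 4) / (1 - s / 2) ^ 2) * s ^ p := by
      gcongr
      exact mul_nonneg hC ((inv_nonneg.2 (sq_nonneg _)).trans h_ratio)

theorem tendsto_integral_wIntegrand_nhdsGT_two {C p : ℝ} (hC : 0 < C) (hp : 0 ≤ p) :
    Tendsto (fun t => ∫ s in t..4, wIntegrand C p s) (𝓝[>] 2) atTop := by
  have h_int : ∀ u v : ℝ, 2 < u → 2 < v →
      IntervalIntegrable (wIntegrand C p) MeasureTheory.volume u v :=
    fun u v hu hv => ((continuousOn_wIntegrand C p).mono fun s hs =>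
      lt_of_lt_of_le (lt_min hu hv) hs.1).intervalIntegrable
  have h_three : Tendsto (fun t => ∫ s in t..3, wIntegrand C p s) (𝓝[>] 2) atTop := by
    refine tendsto_integral_nhdsGT_atTop_of_le (f := fun s => C * 2 ^ p * ((s - 2) ^ 2)⁻¹)
      (by norm_num) ?_ ((continuousOn_wIntegrand C p).mono Ioc_subset_Ioi_self)
      (fun s hs => inv_sq_le_wIntegrand hC.le hp hs) ?_
    · have h_ne : ∀ s ∈ Ioc (2 : ℝ) 3, (s - 2) ^ 2 ≠ 0 := fun s hs =>
        pow_ne_zero 2 (sub_ne_zero.2 hs.1.ne')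
      fun_prop (disch := assumption)
    · simp only [integral_const_mul]
      exact (tendsto_integral_inv_sq_sub_nhdsGT (by norm_num)).const_mul_atTop (by positivity)
  refine (tendsto_atTop_add_const_right _ (∫ s in (3 : ℝ)..4, wIntegrand C p s)
    h_three).congr' ?_
  filter_upwards [Ioo_mem_nhdsGT (show (2 : ℝ) < 3 by norm_num)] with t ht
  exact integral_add_adjacent_intervals (h_int _ _ ht.1 (by norm_num))
    (h_int _ _ (by norm_num) (by norm_num))

open Filter in
theorem stmt_16 (γ B₀ : ℝ) (hγ1 : 1 < γ) (hγ2 : γ < 2) (hB₀ : B₀ ≠ 0)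
    (f : ℝ → ℝ) (hf : ∀ ρ : ℝ, f ρ = 2 * ρ ^ γ / (ρ ^ γ - B₀ ^ 2)) :
    Tendsto f atTop (nhdsWithin 2 (Set.Ioi 2))
    ∧ Tendsto
        (fun ρ : ℝ => B₀ ^ 2 * f ρ ^ (2 / (2 - γ))
          - ∫ s in (f ρ)..4,
              (2 * B₀ ^ 2 / (2 - γ)) * ((1 - s / 4) / (1 - s / 2) ^ 2)
                * s ^ (2 / (2 - γ)))
        atTop atBot := by
  have h_gap : 0 < 2 - γ := by linarith
  have hf_lim : Tendsto f atTop (𝓝[>] 2) := by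
    rw [show f = (fun x => 2 * x / (x - B₀ ^ 2)) ∘ (· ^ γ) from funext hf]
    exact (tendsto_mul_div_sub_atTop_nhdsGT two_pos (by positivity)).comp
      (tendsto_rpow_atTop (by linarith))
  refine ⟨hf_lim, ?_⟩
  have h_power : Tendsto (fun ρ => B₀ ^ 2 * f ρ ^ (2 / (2 - γ))) atTop
      (𝓝 (B₀ ^ 2 * 2 ^ (2 / (2 - γ)))) :=
    ((continuous_const.mul (Real.continuous_rpow_const (by positivity))).tendsto 2).comp
      (hf_lim.mono_right nhdsWithin_le_nhds)
  have h_integral := (tendsto_integral_wIntegrand_nhdsGT_two (C := 2 * B₀ ^ 2 / (2 - γ))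
    (by positivity) (by positivity : 0 ≤ 2 / (2 - γ))).comp hf_lim
  exact (h_power.add_atBot (tendsto_neg_atTop_atBot.comp h_integral)).congr fun ρ =>
    (sub_eq_add_neg _ _).symm
end
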